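/- arXiv:math/0703338 — 3 statements merged into one kernel-verified Lean document; each statement's English description precedes it below -/
import Mathlib

section
/- The number of Temperley-Lieb half-diagrams on N points with n through lines and no boundary connections (equivalently, sequences of N symbols from {'(', ')'} with an excess of n closing parentheses such that at every position the number of ')' to the right is at least the number of '(' to the right) equals B_{N,n} - B_{N,n+2}, where B_{m,k} = \binom{m}{(m-k)/2}. -/
/-!
Removing the first symbol of a half-diagram leaves a half-diagram whose excess of `')'` is one
lower if the symbol was `')'` and one higher if it was `'('`, and a leading `')'` is impossible at
excess `0`. Hence the counts `c N n` satisfy `c (N+1) (n+1) = c N n + c N (n+2)`,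
`c (N+1) 0 = c N 1` and `c 0 n = [n = 0]`. By Pascal's rule `B_{N,n} - B_{N,n+2}` obeys the same
recursion, the boundary case coming from `B_{N+1,0} = 2 B_{N,1}`.
-/

open Finset

/-- `B m k = binom(m, (m-k)/2)`, interpreted as `0` when `(m-k)/2` is not a
nonnegative integer (i.e. when `k > m` or `m - k` is odd). -/
def ballotB (m k : ℕ) : ℕ :=
  if k ≤ m ∧ (m - k) % 2 = 0 then Nat.choose m ((m - k) / 2) else 0

theorem card_filter_fin_cons {α : Type*} [Fintype α] {N : ℕ} (P : (Fin (N + 1) → α) → Prop)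
    [DecidablePred P] : #{f | P f} = ∑ a, #{g : Fin N → α | P (Fin.cons a g)} := by
  simp only [card_filter]
  rw [← Fintype.sum_equiv (Fin.consEquiv fun _ => α) _ _ (fun _ => rfl), Fintype.sum_prod_type]
  rfl

section FinCons

variable {α : Type*} [DecidableEq α] {N : ℕ} (a : α) (g : Fin N → α) (c : α)

theorem card_filter_cons_eq :
    #{i | (Fin.cons a g : Fin (N + 1) → α) i = c} = (if a = c then 1 else 0) + #{j | g j = c} := by
  simp only [card_filter, Fin.sum_univ_succ, Fin.cons_zero, Fin.cons_succ]

theorem card_filter_succ_le_cons_eq (q : Fin N) :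
    #{i | q.succ ≤ i ∧ (Fin.cons a g : Fin (N + 1) → α) i = c} = #{j | q ≤ j ∧ g j = c} := by
  have h0 : ¬ q.succ ≤ 0 := by simp
  simp only [card_filter, Fin.sum_univ_succ, Fin.cons_zero, Fin.cons_succ, Fin.succ_le_succ_iff, h0,
    false_and, if_false, zero_add]

end FinCons

-- `true` encodes `')'` and `false` encodes `'('`.
def IsHalfDiagram {N : ℕ} (n : ℕ) (f : Fin N → Bool) : Prop :=
  #{i | f i = true} = #{i | f i = false} + n ∧
    ∀ p : Fin N, #{i | p ≤ i ∧ f i = false} ≤ #{i | p ≤ i ∧ f i = true}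

instance {N n : ℕ} : DecidablePred (IsHalfDiagram (N := N) n) := fun _ => by
  unfold IsHalfDiagram; infer_instance

section Cons

variable {N n : ℕ} (g : Fin N → Bool)

theorem isHalfDiagram_cons_iff (b : Bool) :
    IsHalfDiagram n (Fin.cons b g : Fin (N + 1) → Bool) ↔
      (#{j | g j = true} + b.toNat = #{j | g j = false} + (!b).toNat + n ∧
        ∀ q : Fin N, #{j | q ≤ j ∧ g j = false} ≤ #{j | q ≤ j ∧ g j = true}) := by
  simp only [IsHalfDiagram, Fin.forall_fin_succ, Fin.zero_le, true_and, card_filter_cons_eq,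
    card_filter_succ_le_cons_eq]
  -- the suffix condition at position `0` is implied by the count equation
  cases b <;>
    simp only [Bool.toNat_true, Bool.toNat_false, Bool.not_true, Bool.not_false, Bool.true_eq_false,
      Bool.false_eq_true, if_true, if_false] <;>
    exact ⟨fun ⟨hE, _, hS⟩ => ⟨by omega, hS⟩, fun ⟨hE, hS⟩ => ⟨by omega, by omega, hS⟩⟩

theorem isHalfDiagram_cons_false :
    IsHalfDiagram n (Fin.cons false g : Fin (N + 1) → Bool) ↔ IsHalfDiagram (n + 1) g := by
  rw [isHalfDiagram_cons_iff, IsHalfDiagram]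
  simp only [Bool.toNat_false, Bool.not_false, Bool.toNat_true]
  exact and_congr_left' (by omega)

theorem isHalfDiagram_cons_true_succ :
    IsHalfDiagram (n + 1) (Fin.cons true g : Fin (N + 1) → Bool) ↔ IsHalfDiagram n g := by
  rw [isHalfDiagram_cons_iff, IsHalfDiagram]
  simp only [Bool.toNat_false, Bool.not_true, Bool.toNat_true]
  exact and_congr_left' (by omega)

theorem not_isHalfDiagram_cons_true_zero :
    ¬ IsHalfDiagram 0 (Fin.cons true g : Fin (N + 1) → Bool) := by
  rw [isHalfDiagram_cons_iff]
  rintro ⟨hcount, hsuffix⟩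
  simp only [Bool.toNat_true, Bool.not_true, Bool.toNat_false, add_zero] at hcount
  cases N with
  | zero => simp at hcount
  | succ M => have := hsuffix 0; simp only [Fin.zero_le, true_and] at this; omega

end Cons

def halfDiagramCount (N n : ℕ) : ℕ := #{f : Fin N → Bool | IsHalfDiagram n f}

theorem halfDiagramCount_zero (n : ℕ) : halfDiagramCount 0 n = if n = 0 then 1 else 0 := by
  rcases n with _ | n <;> simp [halfDiagramCount, IsHalfDiagram]

theorem halfDiagramCount_succ (N n : ℕ) :
    halfDiagramCount (N + 1) n = #{g : Fin N → Bool | IsHalfDiagram n (Fin.cons true g)}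
      + #{g : Fin N → Bool | IsHalfDiagram n (Fin.cons false g)} := by
  rw [halfDiagramCount, card_filter_fin_cons, Fintype.sum_bool]

theorem halfDiagramCount_succ_zero (N : ℕ) : halfDiagramCount (N + 1) 0 = halfDiagramCount N 1 := by
  rw [halfDiagramCount_succ]
  simp only [not_isHalfDiagram_cons_true_zero, filter_false, card_empty, isHalfDiagram_cons_false,
    zero_add]
  rfl

theorem halfDiagramCount_succ_succ (N n : ℕ) :
    halfDiagramCount (N + 1) (n + 1) = halfDiagramCount N n + halfDiagramCount N (n + 2) := by
  rw [halfDiagramCount_succ]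
  simp only [isHalfDiagram_cons_true_succ, isHalfDiagram_cons_false]
  rfl

theorem ballotB_eq_choose {m k j : ℕ} (h : m = k + 2 * j) : ballotB m k = m.choose j := by
  rw [ballotB, if_pos (by omega)]
  congr 1
  omega

theorem ballotB_eq_zero {m k : ℕ} (h : ∀ j, m ≠ k + 2 * j) : ballotB m k = 0 := by
  rw [ballotB, if_neg]
  rintro ⟨hk, hpar⟩
  exact h ((m - k) / 2) (by omega)

theorem ballotB_succ_succ (N k : ℕ) : ballotB (N + 1) (k + 1) = ballotB N k + ballotB N (k + 2) := by
  by_cases hpar : ∃ j, N = k + 2 * j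
  · obtain ⟨_ | j, rfl⟩ := hpar
    · rw [ballotB_eq_choose (j := 0) (by omega), ballotB_eq_choose (j := 0) (by omega),
        ballotB_eq_zero (fun j => by omega)]
      simp
    · rw [ballotB_eq_choose (j := j + 1) (by omega), ballotB_eq_choose (j := j + 1) (by omega),
        ballotB_eq_choose (j := j) (by omega), Nat.choose_succ_succ', add_comm]
  · push Not at hpar
    rw [ballotB_eq_zero (fun j => by have := hpar j; omega), ballotB_eq_zero hpar,
      ballotB_eq_zero (fun j => by have := hpar (j + 1); omega)]

theorem ballotB_succ_zero (N : ℕ) : ballotB (N + 1) 0 = 2 * ballotB N 1 := by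
  obtain ⟨j, hj | hj⟩ := Nat.even_or_odd' N <;> subst hj
  · rw [ballotB_eq_zero (fun j => by omega), ballotB_eq_zero (fun j => by omega)]
  · rw [ballotB_eq_choose (j := j + 1) (by omega), ballotB_eq_choose (j := j) (by omega),
      Nat.choose_succ_succ', Nat.choose_symm_half]
    exact (two_mul _).symm

theorem halfDiagramCount_add_ballotB (N n : ℕ) :
    halfDiagramCount N n + ballotB N (n + 2) = ballotB N n := by
  induction N generalizing n with
  | zero => rcases n with _ | n <;> simp [halfDiagramCount_zero, ballotB]
  | succ N ih =>
    rcases n with _ | n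
    · have := ih 1
      rw [halfDiagramCount_succ_zero, ballotB_succ_zero, ballotB_succ_succ]
      omega
    · have := ih n
      have := ih (n + 2)
      rw [halfDiagramCount_succ_succ, ballotB_succ_succ, ballotB_succ_succ]
      omega

theorem tl_halfdiagram_count_general (N n : ℕ) :
    (Finset.univ.filter (fun f : Fin N → Bool =>
        (Finset.univ.filter (fun i => f i = true)).card
          = (Finset.univ.filter (fun i => f i = false)).card + n ∧
        ∀ p : Fin N,
          (Finset.univ.filter (fun i => p ≤ i ∧ f i = false)).card
            ≤ (Finset.univ.filter (fun i => p ≤ i ∧ f i = true)).card)).card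
      = ballotB N n - ballotB N (n + 2) := by
  have := halfDiagramCount_add_ballotB N n
  change halfDiagramCount N n = _
  omega

/-- The number of sequences of `N` symbols from `{'(', ')'}` (encoded as
`f : Fin N → Bool`, `true` = `')'`, `false` = `'('`) with an excess of `n`
closing parentheses, such that at every position the number of `')'` to the
right (including that position) is at least the number of `'('` to the right,
equals `B_{N,n} - B_{N,n+2}`. -/
theorem tl_halfdiagram_count (N n : ℕ) (hn : n ≤ N) (hpar : (N - n) % 2 = 0) :
    (Finset.univ.filter (fun f : Fin N → Bool =>
        (Finset.univ.filter (fun i => f i = true)).card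
          = (Finset.univ.filter (fun i => f i = false)).card + n ∧
        ∀ p : Fin N,
          (Finset.univ.filter (fun i => p ≤ i ∧ f i = false)).card
            ≤ (Finset.univ.filter (fun i => p ≤ i ∧ f i = true)).card)).card
      = ballotB N n - ballotB N (n + 2) :=
  tl_halfdiagram_count_general N n
end

section
/- In the Hecke algebra of type A with Murphy elements J_i as above, every completely symmetric polynomial in J_1, ..., J_{N-1} is central. -/
/-!
The generator `g k` commutes with every Murphy element except `J (k - 1)` and `J k`: with the
earlier ones by far commutativity, with the later ones by the braid relation, since
`J (k + 1) = g (k + 1) g k J (k - 1) g k g (k + 1)`. As `J i` is a polynomial in `g 1, …, g i`,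
the Murphy elements commute pairwise. Writing `J k = g k J (k - 1) g k`, the quadratic relation
`g k ^ 2 = (q - q⁻¹) g k + 1` makes `g k` commute with `J (k - 1) + J k`, and commutativity of
`J (k - 1)` and `J k` makes it commute with `J (k - 1) J k`; hence `g k` commutes with every
symmetric polynomial in these two. In the symmetrization, where position `i` carries
`J (i + 1)`, the terms for `σ` and `σ * swap (k - 2) (k - 1)` differ only in the exponents of `J (k - 1)` and `J k`, so their sum is
such a symmetric polynomial flanked by factors commuting with `g k`.
-/

open Equiv

theorem List.prod_ofFn_eq_take_mul_mul_drop {M : Type*} [Monoid M] {n : ℕ} (f : Fin n → M)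
    (p p' : Fin n) (hpp' : (p : ℕ) + 1 = p') :
    (ofFn f).prod = ((ofFn f).take p).prod * (f p * f p') * ((ofFn f).drop (p' + 1)).prod := by
  conv_lhs => rw [← take_append_drop p (ofFn f), drop_eq_getElem_cons (by simp),
    drop_eq_getElem_cons (by simp only [length_ofFn]; omega)]
  simp [hpp', mul_assoc]

section Ring

variable {A : Type*} [Ring A]

theorem commute_braid_conj {g h x : A} (hbraid : g * h * g = h * g * h) (hx : Commute h x) :
    Commute g (h * (g * x * g) * h) :=
  calc g * (h * (g * x * g) * h) = g * h * g * x * g * h := by simp only [mul_assoc]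
    _ = h * g * (h * x) * g * h := by rw [hbraid]; simp only [mul_assoc]
    _ = h * g * x * (h * g * h) := by rw [hx.eq]; simp only [mul_assoc]
    _ = h * (g * x * g) * h * g := by rw [← hbraid]; simp only [mul_assoc]

theorem commute_mul_conj {g x : A} (hx : Commute x (g * x * g)) :
    Commute g (x * (g * x * g)) :=
  calc g * (x * (g * x * g)) = g * x * g * x * g := by simp only [mul_assoc]
    _ = x * (g * x * g) * g := by rw [← hx.eq]

theorem commute_add_conj {R : Type*} [CommSemiring R] [Algebra R A] {g : A} {c : R}
    (hg : g * g = c • g + 1) (x : A) : Commute g (x + g * x * g) := by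
  have hl : g * (x + g * x * g) = g * x + c • (g * x * g) + x * g := by
    rw [mul_add, ← mul_assoc, ← mul_assoc, hg]
    simp only [add_mul, smul_mul_assoc, one_mul, mul_assoc, add_assoc]
  have hr : (x + g * x * g) * g = x * g + c • (g * x * g) + g * x := by
    rw [add_mul, mul_assoc (g * x), hg]
    simp only [mul_add, mul_smul_comm, mul_one, add_assoc]
  rw [Commute, SemiconjBy, hl, hr]
  abel

theorem mul_self_eq_smul_add_one {R : Type*} [Field R] [Algebra R A] {g : A} {q : R}
    (hq : q ≠ 0) (h : (g - algebraMap R A q) * (g + algebraMap R A q⁻¹) = 0) :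
    g * g = (q - q⁻¹) • g + 1 := by
  have hqq : algebraMap R A q * algebraMap R A q⁻¹ = 1 := by
    rw [← map_mul, mul_inv_cancel₀ hq, map_one]
  rw [sub_mul, mul_add, mul_add, ← Algebra.commutes q⁻¹, hqq, ← Algebra.smul_def,
    ← Algebra.smul_def] at h
  rw [sub_smul, ← sub_eq_zero, ← h]
  abel

theorem Commute.pow_add_pow {g x y : A} (hxy : Commute x y) (hs : Commute g (x + y))
    (hp : Commute g (x * y)) (m : ℕ) : Commute g (x ^ m + y ^ m) := by
  induction m using Nat.strong_induction_on with
  | _ m ih =>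
    match m with
    | 0 => simp
    | 1 => simpa using hs
    | m + 2 =>
      have newton : x ^ (m + 2) + y ^ (m + 2)
          = (x + y) * (x ^ (m + 1) + y ^ (m + 1)) - x * y * (x ^ m + y ^ m) := by
        have hyx : y * x ^ (m + 1) = x ^ (m + 1) * y := (hxy.symm.pow_right _).eq
        have hxyx : x * y * x ^ m = x ^ (m + 1) * y := by
          rw [mul_assoc, (hxy.symm.pow_right m).eq, ← mul_assoc, ← pow_succ']
        rw [add_mul, mul_add, mul_add, mul_add, hyx, hxyx, ← pow_succ', ← pow_succ',
          mul_assoc x y, ← pow_succ']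
        abel
      rw [newton]
      exact (hs.mul_right (ih _ (by omega))).sub_right (hp.mul_right (ih _ (by omega)))

theorem Commute.pow_mul_pow_add_pow_mul_pow {g x y : A} (hxy : Commute x y)
    (hs : Commute g (x + y)) (hp : Commute g (x * y)) (a b : ℕ) :
    Commute g (x ^ a * y ^ b + x ^ b * y ^ a) := by
  wlog hab : a ≤ b generalizing a b
  · simpa only [add_comm] using this b a (by omega)
  obtain ⟨c, rfl⟩ := Nat.exists_eq_add_of_le hab
  have hfactor : x ^ a * y ^ (a + c) + x ^ (a + c) * y ^ a = (x * y) ^ a * (x ^ c + y ^ c) := by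
    rw [hxy.mul_pow, mul_add, pow_add, pow_add, mul_assoc, mul_assoc,
      ((hxy.symm.pow_pow a c).eq), add_comm]
    simp only [mul_assoc]
  rw [hfactor]
  exact (hp.pow_right a).mul_right (hxy.pow_add_pow hs hp c)

theorem Commute.ofFn_prod_add_ofFn_prod {n : ℕ} {G : A} {f f' : Fin n → A} {p p' : Fin n}
    (hpp' : (p : ℕ) + 1 = p') (heq : ∀ i, i ≠ p → i ≠ p' → f' i = f i)
    (hG : ∀ i, i ≠ p → i ≠ p' → Commute G (f i))
    (hmid : Commute G (f p * f p' + f' p * f' p')) :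
    Commute G ((List.ofFn f).prod + (List.ofFn f').prod) := by
  have htake : (List.ofFn f').take p = (List.ofFn f).take p :=
    List.ext_getElem (by simp) fun i _ hi => by
      simp only [List.length_take, List.length_ofFn, Fin.is_le', inf_of_le_left] at hi
      simpa using heq ⟨i, by omega⟩ (Fin.ne_of_val_ne (by dsimp only; omega))
        (Fin.ne_of_val_ne (by dsimp only; omega))
  have hdrop : (List.ofFn f').drop (p' + 1) = (List.ofFn f).drop (p' + 1) :=
    List.ext_getElem (by simp) fun i _ hi => by
      simp only [List.length_drop, List.length_ofFn] at hi
      simpa using heq ⟨p' + 1 + i, by omega⟩ (Fin.ne_of_val_ne (by dsimp only; omega))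
        (Fin.ne_of_val_ne (by dsimp only; omega))
  have hout : ∀ i (hi : i < n), i ≠ p → i ≠ p' → Commute G (f ⟨i, hi⟩) :=
    fun i hi h h' => hG _ (Fin.ne_of_val_ne h) (Fin.ne_of_val_ne h')
  have htakeG : Commute G ((List.ofFn f).take p).prod := by
    refine Commute.list_prod_right _ _ fun x hx => ?_
    obtain ⟨i, hi, rfl⟩ := List.mem_iff_getElem.1 hx
    simp only [List.length_take, List.length_ofFn, Fin.is_le', inf_of_le_left] at hi
    simpa using hout i (by omega) (by omega) (by omega)
  have hdropG : Commute G ((List.ofFn f).drop (p' + 1)).prod := by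
    refine Commute.list_prod_right _ _ fun x hx => ?_
    obtain ⟨i, hi, rfl⟩ := List.mem_iff_getElem.1 hx
    simp only [List.length_drop, List.length_ofFn] at hi
    simpa using hout (p' + 1 + i) (by omega) (by omega) (by omega)
  rw [List.prod_ofFn_eq_take_mul_mul_drop f p p' hpp',
    List.prod_ofFn_eq_take_mul_mul_drop f' p p' hpp', htake, hdrop, ← add_mul, ← mul_add]
  exact (htakeG.mul_right hmid).mul_right hdropG

theorem Commute.sum_perm_ofFn_prod_pow {n : ℕ} {G : A} {u : Fin n → A} {p p' : Fin n}
    (hpp' : (p : ℕ) + 1 = p') (hG : ∀ i, i ≠ p → i ≠ p' → Commute G (u i))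
    (hsym : ∀ a b, Commute G (u p ^ a * u p' ^ b + u p ^ b * u p' ^ a)) (d : Fin n → ℕ) :
    Commute G (∑ σ : Perm (Fin n), (List.ofFn fun i => u i ^ d (σ i)).prod) := by
  set τ := swap p p'
  set F := fun σ : Perm (Fin n) => (List.ofFn fun i => u i ^ d (σ i)).prod
  have hpair : ∀ σ, Commute G (F σ + F (σ * τ)) := fun σ =>
    Commute.ofFn_prod_add_ofFn_prod hpp'
      (fun i h h' => by simp [τ, swap_apply_of_ne_of_ne h h'])
      (fun i h h' => (hG i h h').pow_right _) (by simpa [F, τ] using hsym _ _)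
  have hτ : τ ≠ 1 := by
    rw [Ne, swap_eq_one_iff]
    exact Fin.ne_of_val_ne (by omega)
  rw [Commute, SemiconjBy, ← sub_eq_zero, Finset.mul_sum, Finset.sum_mul,
    ← Finset.sum_sub_distrib]
  refine Finset.sum_ninvolution (· * τ) (fun σ => ?_) (fun σ _ => by simpa using hτ) (by simp)
    (fun σ => by simp [τ, mul_assoc])
  rw [sub_add_sub_comm, ← mul_add, ← add_mul, sub_eq_zero]
  exact hpair σ

end Ring

namespace HeckeMurphy

variable {A : Type*} [Ring A] {N : ℕ} {g J : ℕ → A}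

theorem commute_g_J_of_add_two_le
    (hcomm : ∀ i j, 1 ≤ i → i ≤ N - 1 → 1 ≤ j → j ≤ N - 1 → i + 1 < j →
      g i * g j = g j * g i)
    (hJ1 : J 1 = g 1 ^ 2) (hJ : ∀ i, 2 ≤ i → i ≤ N - 1 → J i = g i * J (i - 1) * g i)
    {i j : ℕ} (hj : 1 ≤ j) (hji : j + 2 ≤ i) (hi : i ≤ N - 1) : Commute (g i) (J j) := by
  induction j, hj using Nat.le_induction with
  | base =>
    rw [hJ1]
    exact (Commute.symm (hcomm 1 i le_rfl (by omega) (by omega) hi (by omega))).pow_right 2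
  | succ j hj ih =>
    have hgg : Commute (g i) (g (j + 1)) :=
      (hcomm (j + 1) i (by omega) (by omega) (by omega) hi (by omega)).symm
    rw [hJ (j + 1) (by omega) (by omega), Nat.add_sub_cancel]
    exact (hgg.mul_right (ih (by omega))).mul_right hgg

theorem commute_g_J_of_lt
    (hbraid : ∀ i, 1 ≤ i → i + 1 ≤ N - 1 →
      g i * g (i + 1) * g i = g (i + 1) * g i * g (i + 1))
    (hcomm : ∀ i j, 1 ≤ i → i ≤ N - 1 → 1 ≤ j → j ≤ N - 1 → i + 1 < j →
      g i * g j = g j * g i)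
    (hJ1 : J 1 = g 1 ^ 2) (hJ : ∀ i, 2 ≤ i → i ≤ N - 1 → J i = g i * J (i - 1) * g i)
    {i j : ℕ} (hi : 1 ≤ i) (hij : i < j) (hj : j ≤ N - 1) : Commute (g i) (J j) := by
  induction j, hij using Nat.le_induction with
  | base =>
    obtain ⟨x, hJi, hx⟩ : ∃ x, J i = g i * x * g i ∧ Commute (g (i + 1)) x := by
      rcases Nat.lt_or_ge i 2 with hi1 | hi2
      · obtain rfl : i = 1 := by omega
        exact ⟨1, by simp [hJ1, sq], Commute.one_right _⟩
      · exact ⟨J (i - 1), hJ i hi2 (by omega),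
          commute_g_J_of_add_two_le hcomm hJ1 hJ (by omega) (by omega) hj⟩
    rw [hJ (i + 1) (by omega) hj, Nat.add_sub_cancel, hJi]
    exact commute_braid_conj (hbraid i hi hj) hx
  | succ j hij ih =>
    have hgg : Commute (g i) (g (j + 1)) :=
      hcomm i (j + 1) hi (by omega) (by omega) hj (by omega)
    rw [hJ (j + 1) (by omega) hj, Nat.add_sub_cancel]
    exact (hgg.mul_right (ih (by omega))).mul_right hgg

theorem commute_J_J
    (hbraid : ∀ i, 1 ≤ i → i + 1 ≤ N - 1 →
      g i * g (i + 1) * g i = g (i + 1) * g i * g (i + 1))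
    (hcomm : ∀ i j, 1 ≤ i → i ≤ N - 1 → 1 ≤ j → j ≤ N - 1 → i + 1 < j →
      g i * g j = g j * g i)
    (hJ1 : J 1 = g 1 ^ 2) (hJ : ∀ i, 2 ≤ i → i ≤ N - 1 → J i = g i * J (i - 1) * g i)
    {i j : ℕ} (hi : 1 ≤ i) (hij : i < j) (hj : j ≤ N - 1) : Commute (J i) (J j) := by
  induction i, hi using Nat.le_induction with
  | base => rw [hJ1]; exact (commute_g_J_of_lt hbraid hcomm hJ1 hJ le_rfl hij hj).pow_left 2
  | succ i hi ih =>
    rw [hJ (i + 1) (by omega) (by omega), Nat.add_sub_cancel]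
    have hg := commute_g_J_of_lt hbraid hcomm hJ1 hJ (by omega) hij hj
    exact (hg.mul_left (ih (by omega))).mul_left hg

theorem commute_g_J_of_ne
    (hbraid : ∀ i, 1 ≤ i → i + 1 ≤ N - 1 →
      g i * g (i + 1) * g i = g (i + 1) * g i * g (i + 1))
    (hcomm : ∀ i j, 1 ≤ i → i ≤ N - 1 → 1 ≤ j → j ≤ N - 1 → i + 1 < j →
      g i * g j = g j * g i)
    (hJ1 : J 1 = g 1 ^ 2) (hJ : ∀ i, 2 ≤ i → i ≤ N - 1 → J i = g i * J (i - 1) * g i)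
    {i j : ℕ} (hi : 1 ≤ i) (hiN : i ≤ N - 1) (hj : 1 ≤ j) (hjN : j ≤ N - 1)
    (hji : j + 1 ≠ i) (hji' : j ≠ i) : Commute (g i) (J j) := by
  rcases Nat.lt_or_gt_of_ne hji' with hlt | hgt
  · exact commute_g_J_of_add_two_le hcomm hJ1 hJ hj (by omega) hiN
  · exact commute_g_J_of_lt hbraid hcomm hJ1 hJ hi hgt hjN

theorem commute_g_symm_J_J {K : Type*} [Field K] [Algebra K A] {q : K} (hq : q ≠ 0)
    (hbraid : ∀ i, 1 ≤ i → i + 1 ≤ N - 1 →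
      g i * g (i + 1) * g i = g (i + 1) * g i * g (i + 1))
    (hcomm : ∀ i j, 1 ≤ i → i ≤ N - 1 → 1 ≤ j → j ≤ N - 1 → i + 1 < j →
      g i * g j = g j * g i)
    (hquad : ∀ i, 1 ≤ i → i ≤ N - 1 →
      (g i - algebraMap K A q) * (g i + algebraMap K A q⁻¹) = 0)
    (hJ1 : J 1 = g 1 ^ 2) (hJ : ∀ i, 2 ≤ i → i ≤ N - 1 → J i = g i * J (i - 1) * g i)
    {k : ℕ} (hk : 2 ≤ k) (hkN : k ≤ N - 1) (a b : ℕ) :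
    Commute (g k) (J (k - 1) ^ a * J k ^ b + J (k - 1) ^ b * J k ^ a) := by
  have hadj : Commute (J (k - 1)) (J k) :=
    commute_J_J hbraid hcomm hJ1 hJ (by omega) (by omega) hkN
  refine hadj.pow_mul_pow_add_pow_mul_pow ?_ ?_ a b
  · rw [hJ k hk hkN]
    exact commute_add_conj (mul_self_eq_smul_add_one hq (hquad k (by omega) hkN)) _
  · rw [hJ k hk hkN] at hadj ⊢
    exact commute_mul_conj hadj

end HeckeMurphy

/-- Symmetric polynomials in `J 1, …, J (N - 1)` are spanned by the symmetrized monomials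
`∑ σ, ∏ i, J (i + 1) ^ d (σ i)`, and centrality in the Hecke algebra means commuting with its
generators `g k`. -/
theorem heckeA_symmetric_murphy_central (A : Type*) [Ring A] [Algebra ℂ A]
    (N : ℕ) (q : ℂ) (hq : q ≠ 0) (g J : ℕ → A)
    (hbraid : ∀ i, 1 ≤ i → i + 1 ≤ N - 1 →
      g i * g (i + 1) * g i = g (i + 1) * g i * g (i + 1))
    (hcomm : ∀ i j, 1 ≤ i → i ≤ N - 1 → 1 ≤ j → j ≤ N - 1 → i + 1 < j →
      g i * g j = g j * g i)
    (hquad : ∀ i, 1 ≤ i → i ≤ N - 1 →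
      (g i - algebraMap ℂ A q) * (g i + algebraMap ℂ A q⁻¹) = 0)
    (hJ1 : J 1 = g 1 ^ 2)
    (hJ : ∀ i, 2 ≤ i → i ≤ N - 1 → J i = g i * J (i - 1) * g i) :
    ∀ (d : Fin (N - 1) → ℕ) (k : ℕ), 1 ≤ k → k ≤ N - 1 →
      g k * (∑ σ : Equiv.Perm (Fin (N - 1)),
          (List.ofFn (fun i : Fin (N - 1) => J ((i : ℕ) + 1) ^ d (σ i))).prod)
        = (∑ σ : Equiv.Perm (Fin (N - 1)),
          (List.ofFn (fun i : Fin (N - 1) => J ((i : ℕ) + 1) ^ d (σ i))).prod) * g k := by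
  intro d k hk hkN
  rcases Nat.lt_or_ge k 2 with hk1 | hk2
  · obtain rfl : k = 1 := by omega
    refine (Commute.sum_right _ _ _ fun σ _ => Commute.list_prod_right _ _ fun x hx => ?_).eq
    obtain ⟨i, rfl⟩ := List.mem_ofFn.1 hx
    refine Commute.pow_right ?_ _
    rcases Nat.eq_zero_or_pos i with hi | hi
    · simp [hi, hJ1]
    · exact HeckeMurphy.commute_g_J_of_ne hbraid hcomm hJ1 hJ le_rfl hkN (by omega) (by omega)
        (by omega) (by omega)
  · obtain ⟨p, rfl⟩ : ∃ p, k = p + 2 := ⟨k - 2, by omega⟩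
    refine (Commute.sum_perm_ofFn_prod_pow (u := fun i : Fin (N - 1) => J (i + 1))
      (p := ⟨p, by omega⟩) (p' := ⟨p + 1, by omega⟩) rfl (fun i hi hi' => ?_)
      (HeckeMurphy.commute_g_symm_J_J hq hbraid hcomm hquad hJ1 hJ hk2 hkN) d).eq
    refine HeckeMurphy.commute_g_J_of_ne hbraid hcomm hJ1 hJ hk hkN (by omega) (by omega)
      (fun h => hi (Fin.ext (by dsimp only; omega))) (fun h => hi' (Fin.ext (by dsimp only; omega)))
end

section
/- In an associative algebra, define E_0 = 1 and E_{i} = s^{c_i} E_{i-1} e_{i-1} E_{i-1} with c_i = (-1)^i, where the e_j are 1BTL generators with e_0^2 = s e_0, e_j^2 = \delta e_j (j \ge 1), e_j e_{j\pm1} e_j = e_j, e_1 e_0 e_1 = e_1, and distant generators commute. Then each E_i is idempotent: E_i^2 = E_i, and E_i E_j = E_j = E_j E_i for j \ge i. -/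
private lemma sandwich_aux {A : Type*} [Ring A] (x y a : A) (h : x * y = y * x) :
    y * (x * a * x) * y = x * (y * a * y) * x := by
  calc y * (x * a * x) * y = (y * x) * a * (x * y) := by noncomm_ring
    _ = (x * y) * a * (y * x) := by rw [h]
    _ = x * (y * a * y) * x := by noncomm_ring

/-- In the one-boundary Temperley-Lieb algebra with `e₀² = s e₀`,
`e_j² = δ e_j` (`j ≥ 1`), `e_j e_{j±1} e_j = e_j`, `e₁ e₀ e₁ = e₁`, and
distant commutation, the elements defined by `E₀ = 1`,
`E_i = s^{c_i} E_{i-1} e_{i-1} E_{i-1}` with `c_i = (-1)^i` are idempotent,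
and `E_i E_j = E_j = E_j E_i` for `j ≥ i`. -/
theorem oneBoundary_idempotents (A : Type*) [Ring A] [Algebra ℂ A]
    (s δ : ℂ) (hs : s ≠ 0) (e E : ℕ → A)
    (h0 : e 0 * e 0 = algebraMap ℂ A s * e 0)
    (hsq : ∀ j, 1 ≤ j → e j * e j = algebraMap ℂ A δ * e j)
    (hadj : ∀ j, 1 ≤ j →
      e j * e (j + 1) * e j = e j ∧ e (j + 1) * e j * e (j + 1) = e (j + 1))
    (h101 : e 1 * e 0 * e 1 = e 1)
    (hcom : ∀ i j, i + 1 < j → e i * e j = e j * e i)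
    (hE0 : E 0 = 1)
    (hEi : ∀ i, E (i + 1)
      = algebraMap ℂ A (if (i + 1) % 2 = 0 then s else s⁻¹) * (E i * e i * E i)) :
    (∀ i, E i * E i = E i) ∧
    (∀ i j, i ≤ j → E i * E j = E j ∧ E j * E i = E j) := by
  set f : ℕ → ℂ := fun n => if n % 2 = 0 then s else s⁻¹ with hfdef
  have hE : ∀ i, E (i + 1) = f (i + 1) • (E i * e i * E i) := by
    intro i
    rw [hEi i, Algebra.smul_def]
  have hfmul : ∀ n, f (n + 1) * f n = 1 := by
    intro n
    rcases Nat.even_or_odd n with h | h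
    · have h1 : n % 2 = 0 := Nat.even_iff.mp h
      have h2 : (n + 1) % 2 = 1 := by omega
      simp [hfdef, h1, h2, inv_mul_cancel₀ hs]
    · have h1 : n % 2 = 1 := Nat.odd_iff.mp h
      have h2 : (n + 1) % 2 = 0 := by omega
      simp [hfdef, h1, h2, mul_inv_cancel₀ hs]
  -- E i commutes with e j for i < j
  have hcomm : ∀ i j, i < j → E i * e j = e j * E i := by
    intro i
    induction i with
    | zero => intro j _; rw [hE0, one_mul, mul_one]
    | succ i ih =>
      intro j hj
      have h1 : Commute (E i) (e j) := ih j (by omega)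
      have h2 : Commute (e i) (e j) := hcom i j (by omega)
      have : Commute (E i * e i * E i) (e j) := (h1.mul_left h2).mul_left h1
      rw [hE i]
      exact (this.smul_left (f (i + 1))).eq
  -- key lemma: e_{i+1} E_{i+1} e_{i+1} = f(i+1) • (E_i e_{i+1} E_i)
  have hL : ∀ i, e (i + 1) * E (i + 1) * e (i + 1)
      = f (i + 1) • (E i * e (i + 1) * E i) := by
    intro i
    have hmid : e (i + 1) * e i * e (i + 1) = e (i + 1) := by
      cases i with
      | zero => exact h101
      | succ k => exact (hadj (k + 1) (by omega)).2
    have hc : E i * e (i + 1) = e (i + 1) * E i := hcomm i (i + 1) (by omega)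
    rw [hE i, mul_smul_comm, smul_mul_assoc]
    congr 1
    calc e (i + 1) * (E i * e i * E i) * e (i + 1)
        = E i * (e (i + 1) * e i * e (i + 1)) * E i := sandwich_aux _ _ _ hc
      _ = E i * e (i + 1) * E i := by rw [hmid]
  -- absorption from idempotency
  have hAbs : ∀ i, E i * E i = E i →
      E (i + 1) * E i = E (i + 1) ∧ E i * E (i + 1) = E (i + 1) := by
    intro i hQ
    constructor
    · rw [hE i, smul_mul_assoc]
      congr 1
      calc E i * e i * E i * E i = E i * e i * (E i * E i) := by noncomm_ring
        _ = E i * e i * E i := by rw [hQ]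
    · rw [hE i, mul_smul_comm]
      congr 1
      calc E i * (E i * e i * E i) = (E i * E i) * e i * E i := by noncomm_ring
        _ = E i * e i * E i := by rw [hQ]
  -- idempotency, proved two at a time
  have hQ : ∀ i, E i * E i = E i := by
    have key : ∀ i, (E i * E i = E i) ∧ (E (i + 1) * E (i + 1) = E (i + 1)) := by
      intro i
      induction i with
      | zero =>
        constructor
        · rw [hE0, one_mul]
        · have hf1 : f 1 = s⁻¹ := by simp [hfdef]
          rw [hE 0, hE0, one_mul, mul_one, hf1]
          rw [smul_mul_assoc, mul_smul_comm, h0, ← Algebra.smul_def]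
          rw [smul_smul, smul_smul]
          congr 1
          field_simp
      | succ i ih =>
        obtain ⟨hQi, hQi1⟩ := ih
        refine ⟨hQi1, ?_⟩
        obtain ⟨hA1, hA2⟩ := hAbs i hQi
        -- E (i+2) * E (i+2) = E (i+2)
        rw [hE (i + 1)]
        rw [smul_mul_assoc, mul_smul_comm, smul_smul]
        have step1 : E (i + 1) * e (i + 1) * E (i + 1) * (E (i + 1) * e (i + 1) * E (i + 1))
            = E (i + 1) * (e (i + 1) * E (i + 1) * e (i + 1)) * E (i + 1) := by
          calc E (i + 1) * e (i + 1) * E (i + 1) * (E (i + 1) * e (i + 1) * E (i + 1))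
              = E (i + 1) * e (i + 1) * (E (i + 1) * E (i + 1)) * e (i + 1) * E (i + 1) := by
                noncomm_ring
            _ = E (i + 1) * e (i + 1) * E (i + 1) * e (i + 1) * E (i + 1) := by rw [hQi1]
            _ = E (i + 1) * (e (i + 1) * E (i + 1) * e (i + 1)) * E (i + 1) := by noncomm_ring
        rw [step1, hL i, mul_smul_comm, smul_mul_assoc, smul_smul]
        have step2 : E (i + 1) * (E i * e (i + 1) * E i) * E (i + 1)
            = E (i + 1) * e (i + 1) * E (i + 1) := by
          calc E (i + 1) * (E i * e (i + 1) * E i) * E (i + 1)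
              = (E (i + 1) * E i) * e (i + 1) * (E i * E (i + 1)) := by noncomm_ring
            _ = E (i + 1) * e (i + 1) * E (i + 1) := by rw [hA1, hA2]
        rw [step2]
        have : f (i + 1 + 1) * f (i + 1 + 1) * f (i + 1) = f (i + 1 + 1) := by
          rw [mul_assoc, hfmul, mul_one]
        rw [this]
    intro i; exact (key i).1
  refine ⟨hQ, ?_⟩
  intro i j hij
  induction j, hij using Nat.le_induction with
  | base => exact ⟨hQ i, hQ i⟩
  | succ j hij ih =>
    obtain ⟨ih1, ih2⟩ := ih
    constructor
    · rw [hE j, mul_smul_comm]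
      congr 1
      calc E i * (E j * e j * E j) = (E i * E j) * e j * E j := by noncomm_ring
        _ = E j * e j * E j := by rw [ih1]
    · rw [hE j, smul_mul_assoc]
      congr 1
      calc E j * e j * E j * E i = E j * e j * (E j * E i) := by noncomm_ring
        _ = E j * e j * E j := by rw [ih2]
end
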